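/- arXiv:2403.12948 — 6 statements merged into one kernel-verified Lean document; each statement's English description precedes it below -/
import Mathlib

section
/- Let (D, d) be a metric space, L ≥ 0, and let f : D → ℝ be L-Lipschitz. Let E ≥ 0 be a noise bound, h ∈ ℝ a safety threshold, and S₀ ⊆ D a nonempty set with f(x) ≥ h for all x ∈ S₀. Let (x_t)_{t≥0} be a sequence in D and (ε_t)_{t≥0} a sequence in ℝ with |ε_t| ≤ E for all t; set y_t = f(x_t) + ε_t, and define the safe sets recursively by S_{t+1} = S_t ∪ { x ∈ D : y_t − E − L·d(x_t, x) ≥ h }. Then for every t ≥ 0 and every x ∈ S_t, f(x) ≥ h. -/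
/-- Every element of any LoSBO safe set is safe: `f x ≥ h` for all `x ∈ S t`. -/
theorem losbo_safe_sets_are_safe
    {D : Type*} [MetricSpace D] (L : ℝ) (hL : 0 ≤ L) (f : D → ℝ)
    (hf : ∀ x x' : D, |f x - f x'| ≤ L * dist x x')
    (E : ℝ) (hE : 0 ≤ E) (h : ℝ)
    (S : ℕ → Set D) (hS0ne : (S 0).Nonempty) (hS0 : ∀ x ∈ S 0, f x ≥ h)
    (x : ℕ → D) (ε : ℕ → ℝ) (hε : ∀ t, |ε t| ≤ E)
    (y : ℕ → ℝ) (hy : ∀ t, y t = f (x t) + ε t)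
    (hSrec : ∀ t, S (t + 1) = S t ∪ { z : D | y t - E - L * dist (x t) z ≥ h }) :
    ∀ t : ℕ, ∀ z ∈ S t, f z ≥ h := by
  intro t
  induction t with
  | zero => exact hS0
  | succ n ih =>
    intro z hz
    rw [hSrec n] at hz
    rcases hz with hz | hz
    · exact ih z hz
    · simp only [Set.mem_setOf_eq, hy n] at hz
      have h1 : ε n ≤ E := (abs_le.mp (hε n)).2
      have h2 : f (x n) - f z ≤ L * dist (x n) z :=
        (abs_le.mp (hf (x n) z)).2 |>.trans_eq rfl
      linarith
end

section
/- (Safety of LoSBO, Proposition 1.) Let (D, d) be a metric space, L ≥ 0, and let f : D → ℝ be L-Lipschitz. Let E ≥ 0 be a noise bound, h ∈ ℝ a safety threshold, and S₀ ⊆ D a nonempty set with f(x) ≥ h for all x ∈ S₀. Let (x_t)_{t≥0} be a sequence in D and (ε_t)_{t≥0} a sequence in ℝ with |ε_t| ≤ E for all t; set y_t = f(x_t) + ε_t, and define the safe sets recursively by S_{t+1} = S_t ∪ { x ∈ D : y_t − E − L·d(x_t, x) ≥ h }. If the queries are chosen from the current safe set, i.e., x_t ∈ S_t for every t ≥ 0,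 then every queried input is safe: f(x_t) ≥ h for all t ≥ 0. In particular this holds for any choice of the scaling factors β_t used by the algorithm, since they do not enter the safe-set recursion. -/
/-- Safety of LoSBO (Proposition 1): if the queries are chosen from the current
safe set, then every queried input is safe, i.e., `f (x t) ≥ h` for all `t`. -/
theorem losbo_safety
    {D : Type*} [MetricSpace D] (L : ℝ) (hL : 0 ≤ L) (f : D → ℝ)
    (hf : ∀ x x' : D, |f x - f x'| ≤ L * dist x x')
    (E : ℝ) (hE : 0 ≤ E) (h : ℝ)
    (S : ℕ → Set D) (hS0ne : (S 0).Nonempty) (hS0 : ∀ x ∈ S 0, f x ≥ h)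
    (x : ℕ → D) (ε : ℕ → ℝ) (hε : ∀ t, |ε t| ≤ E)
    (y : ℕ → ℝ) (hy : ∀ t, y t = f (x t) + ε t)
    (hSrec : ∀ t, S (t + 1) = S t ∪ { z : D | y t - E - L * dist (x t) z ≥ h })
    (hquery : ∀ t, x t ∈ S t) :
    ∀ t : ℕ, f (x t) ≥ h := by
  have key : ∀ t : ℕ, ∀ z ∈ S t, f z ≥ h := by
    intro t
    induction t with
    | zero => exact hS0
    | succ n ih =>
      intro z hz
      rw [hSrec n] at hz
      rcases hz with hz | hz
      · exact ih z hz
      · have hge : y n - E - L * dist (x n) z ≥ h := hz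
        have h1 : f (x n) - f z ≤ L * dist (x n) z :=
          (abs_le.mp (hf (x n) z)).2
        have h2 : ε n ≤ E := (abs_le.mp (hε n)).2
        have := hy n
        linarith
  intro t
  exact key t (x t) (hquery t)
end

section
/- (Remark 2, item 1: LoSBO safety under asymmetric, time-varying, heteroscedastic noise.) Let (D, d) be a metric space, L ≥ 0, and let f : D → ℝ be L-Lipschitz. Let E_ℓ, E_u : D × ℕ → [0, ∞) be noise-bound functions, h ∈ ℝ a safety threshold, and S₀ ⊆ D a nonempty set with f(x) ≥ h for all x ∈ S₀. Let (x_t)_{t≥0} be a sequence in D and (ε_t)_{t≥0} a sequence in ℝ with −E_ℓ(x_t, t) ≤ ε_t ≤ E_u(x_t, t) for all t; set y_t = f(x_t) + ε_t, and define the safe sets recursively by S_{t+1} = S_t ∪ { x ∈ D : y_t − E_u(x_t, t) − L·d(x_t, x) ≥ h }. Then for every t ≥ 0 and every x ∈ S_t, f(x) ≥ h; consequently, if x_t ∈ S_t for all t, then f(x_t) ≥ h for all t. -/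
/-- LoSBO safety under asymmetric, time-varying, heteroscedastic noise
(Remark 2, item 1). -/
theorem losbo_safety_heteroscedastic
    {D : Type*} [MetricSpace D] (L : ℝ) (hL : 0 ≤ L) (f : D → ℝ)
    (hf : ∀ x x' : D, |f x - f x'| ≤ L * dist x x')
    (Eℓ Eu : D → ℕ → ℝ) (hEℓ : ∀ z t, 0 ≤ Eℓ z t) (hEu : ∀ z t, 0 ≤ Eu z t)
    (h : ℝ)
    (S : ℕ → Set D) (hS0ne : (S 0).Nonempty) (hS0 : ∀ x ∈ S 0, f x ≥ h)
    (x : ℕ → D) (ε : ℕ → ℝ)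
    (hε : ∀ t, -Eℓ (x t) t ≤ ε t ∧ ε t ≤ Eu (x t) t)
    (y : ℕ → ℝ) (hy : ∀ t, y t = f (x t) + ε t)
    (hSrec : ∀ t, S (t + 1) = S t ∪ { z : D | y t - Eu (x t) t - L * dist (x t) z ≥ h }) :
    (∀ t : ℕ, ∀ z ∈ S t, f z ≥ h) ∧ ((∀ t, x t ∈ S t) → ∀ t, f (x t) ≥ h) := by
  have main : ∀ t : ℕ, ∀ z ∈ S t, f z ≥ h := by
    intro t
    induction t with
    | zero => exact hS0
    | succ n ih =>
      intro z hz
      rw [hSrec n] at hz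
      rcases hz with hz | hz
      · exact ih z hz
      · have hm : y n - Eu (x n) n - L * dist (x n) z ≥ h := hz
        have h1 : y n ≤ f (x n) + Eu (x n) n := by
          rw [hy n]; linarith [(hε n).2]
        have h2 : f (x n) - f z ≤ L * dist (x n) z :=
          le_trans (le_abs_self _) (hf (x n) z)
        linarith
  exact ⟨main, fun hx t => main t (x t) (hx t)⟩
end

section
/- (Remark 2, item 2: LoSBO safety under a general modulus of continuity.) Let (D, d) be a metric space and let φ : [0, ∞) → [0, ∞) be continuous and strictly increasing with φ(0) = 0. Let f : D → ℝ satisfy f(x′) ≥ f(x) − φ(d(x, x′)) for all x, x′ ∈ D. Let E ≥ 0 be a noise bound, h ∈ ℝ a safety threshold, and S₀ ⊆ D a nonempty set with f(x) ≥ h for all x ∈ S₀. Let (x_t)_{t≥0} be a sequence in D and (ε_t)_{t≥0} a sequence in ℝ with |ε_t| ≤ E for all t; set y_t = f(x_t) + ε_t, and define the safe sets recursively by S_{t+1} = S_t ∪ { x ∈ D : y_t − E − φ(d(x_t, x)) ≥ h }. Then for every t ≥ 0 and every x ∈ S_t, f(x) ≥ h; consequently, if x_t ∈ S_t for all t, then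 f(x_t) ≥ h for all t. -/
/-- LoSBO safety under a general modulus of continuity (Remark 2, item 2). -/
theorem losbo_safety_modulus
    {D : Type*} [MetricSpace D]
    (φ : ℝ → ℝ) (hφ0 : φ 0 = 0) (hφnn : ∀ r : ℝ, 0 ≤ r → 0 ≤ φ r)
    (hφcont : ContinuousOn φ (Set.Ici (0 : ℝ)))
    (hφmono : StrictMonoOn φ (Set.Ici (0 : ℝ)))
    (f : D → ℝ) (hf : ∀ x x' : D, f x' ≥ f x - φ (dist x x'))
    (E : ℝ) (hE : 0 ≤ E) (h : ℝ)
    (S : ℕ → Set D) (hS0ne : (S 0).Nonempty) (hS0 : ∀ x ∈ S 0, f x ≥ h)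
    (x : ℕ → D) (ε : ℕ → ℝ) (hε : ∀ t, |ε t| ≤ E)
    (y : ℕ → ℝ) (hy : ∀ t, y t = f (x t) + ε t)
    (hSrec : ∀ t, S (t + 1) = S t ∪ { z : D | y t - E - φ (dist (x t) z) ≥ h }) :
    (∀ t : ℕ, ∀ z ∈ S t, f z ≥ h) ∧ ((∀ t, x t ∈ S t) → ∀ t, f (x t) ≥ h) := by
  have main : ∀ t : ℕ, ∀ z ∈ S t, f z ≥ h := by
    intro t
    induction t with
    | zero => exact hS0
    | succ n ih =>
      intro z hz
      rw [hSrec n] at hz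
      rcases hz with hz | hz
      · exact ih z hz
      · have h1 : y n - E - φ (dist (x n) z) ≥ h := hz
        have h2 : f z ≥ f (x n) - φ (dist (x n) z) := hf (x n) z
        have h3 : ε n ≤ E := (abs_le.mp (hε n)).2
        have := hy n
        linarith
  exact ⟨main, fun hx t => main t (x t) (hx t)⟩
end

section
/- (Safety of LoS-GP-UCB.) Let (D, d) be a metric space, L ≥ 0, and let f : D → ℝ be L-Lipschitz. Let E ≥ 0 be a noise bound, h ∈ ℝ a safety threshold, and S₀ ⊆ D a nonempty set with f(x) ≥ h for all x ∈ S₀. Let (a_t)_{t≥0} be any sequence of acquisition functions a_t : D → ℝ. Let (ε_t)_{t≥0} be a sequence in ℝ with |ε_t| ≤ E, let the safe sets be defined recursively by S_{t+1} = S_t ∪ { x ∈ D : y_t − E − L·d(x_t, x) ≥ h } with y_t = f(x_t) + ε_t, and suppose each query x_t is a maximizer of a_t over the current safe set, i.e., x_t ∈ S_t and a_t(x_t) ≥ a_t(x) for all x ∈ S_t. Then f(x_t) ≥ h for all t ≥ 0, irrespective of the choice of the acquisition functions a_t (in particular, of the GP posterior and the scaling factors β_t defining a_t(x) = μ_t(x)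 + β_t σ_t(x)). -/
/-- Safety of LoS-GP-UCB: if each query maximizes an arbitrary acquisition
function over the current LoSBO safe set, then every query is safe, for any
choice of the acquisition functions. -/
theorem los_gp_ucb_safety
    {D : Type*} [MetricSpace D] (L : ℝ) (hL : 0 ≤ L) (f : D → ℝ)
    (hf : ∀ x x' : D, |f x - f x'| ≤ L * dist x x')
    (E : ℝ) (hE : 0 ≤ E) (h : ℝ)
    (S : ℕ → Set D) (hS0ne : (S 0).Nonempty) (hS0 : ∀ x ∈ S 0, f x ≥ h)
    (a : ℕ → D → ℝ)
    (x : ℕ → D) (ε : ℕ → ℝ) (hε : ∀ t, |ε t| ≤ E)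
    (y : ℕ → ℝ) (hy : ∀ t, y t = f (x t) + ε t)
    (hSrec : ∀ t, S (t + 1) = S t ∪ { z : D | y t - E - L * dist (x t) z ≥ h })
    (hquery : ∀ t, x t ∈ S t ∧ ∀ z ∈ S t, a t (x t) ≥ a t z) :
    ∀ t : ℕ, f (x t) ≥ h := by
  have key : ∀ t, ∀ z ∈ S t, f z ≥ h := by
    intro t
    induction t with
    | zero => exact hS0
    | succ t ih =>
      intro z hz
      rw [hSrec t] at hz
      rcases hz with hz | hz
      · exact ih z hz
      · have hεt := hε t
        have h1 : f (x t) - f z ≤ L * dist (x t) z :=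
          (abs_le.mp (hf (x t) z)).2
        have h2 : ε t ≤ E := (abs_le.mp hεt).2
        have hz' : f (x t) + ε t - E - L * dist (x t) z ≥ h := by
          rw [← hy t]; exact hz
        linarith
  intro t
  exact key t (x t) (hquery t).1
end

section
/- (Remark 2, combined generalization: LoSBO safety under a general modulus of continuity and asymmetric, time-varying, heteroscedastic noise.) Let (D, d) be a metric space and let φ : [0, ∞) → [0, ∞) be continuous and strictly increasing with φ(0) = 0. Let f : D → ℝ satisfy f(x′) ≥ f(x) − φ(d(x, x′)) for all x, x′ ∈ D. Let E_ℓ, E_u : D × ℕ → [0, ∞), h ∈ ℝ, and let S₀ ⊆ D be nonempty with f(x) ≥ h for all x ∈ S₀. Let (x_t)_{t≥0} be a sequence in D and (ε_t)_{t≥0} a sequence in ℝ with −E_ℓ(x_t, t) ≤ ε_t ≤ E_u(x_t, t) for all t; set y_t = f(x_t) + ε_t, and define the safe sets recursively by S_{t+1} = S_t ∪ { x ∈ D : y_t − E_u(x_t, t) − φ(d(x_t, x)) ≥ h }. Then for every t ≥ 0 and every x ∈ S_t, f(x) ≥ h; consequently, if x_t ∈ S_t for all t, then f(x_t) ≥ h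 for all t. -/
/-- Remark 2, combined generalization: LoSBO safety under a general modulus of
continuity and asymmetric, time-varying, heteroscedastic noise. -/
theorem losbo_safety_modulus_heteroscedastic
    {D : Type*} [MetricSpace D]
    (φ : ℝ → ℝ) (hφ0 : φ 0 = 0) (hφnn : ∀ r : ℝ, 0 ≤ r → 0 ≤ φ r)
    (hφcont : ContinuousOn φ (Set.Ici (0 : ℝ)))
    (hφmono : StrictMonoOn φ (Set.Ici (0 : ℝ)))
    (f : D → ℝ) (hf : ∀ x x' : D, f x' ≥ f x - φ (dist x x'))
    (Eℓ Eu : D → ℕ → ℝ) (hEℓ : ∀ z t, 0 ≤ Eℓ z t) (hEu : ∀ z t, 0 ≤ Eu z t)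
    (h : ℝ)
    (S : ℕ → Set D) (hS0ne : (S 0).Nonempty) (hS0 : ∀ x ∈ S 0, f x ≥ h)
    (x : ℕ → D) (ε : ℕ → ℝ)
    (hε : ∀ t, -Eℓ (x t) t ≤ ε t ∧ ε t ≤ Eu (x t) t)
    (y : ℕ → ℝ) (hy : ∀ t, y t = f (x t) + ε t)
    (hSrec : ∀ t, S (t + 1) = S t ∪ { z : D | y t - Eu (x t) t - φ (dist (x t) z) ≥ h }) :
    (∀ t : ℕ, ∀ z ∈ S t, f z ≥ h) ∧ ((∀ t, x t ∈ S t) → ∀ t, f (x t) ≥ h) := by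
  have main : ∀ t : ℕ, ∀ z ∈ S t, f z ≥ h := by
    intro t
    induction t with
    | zero => exact hS0
    | succ n ih =>
      intro z hz
      rw [hSrec n] at hz
      rcases hz with hz | hz
      · exact ih z hz
      · have h1 : f z ≥ f (x n) - φ (dist (x n) z) := hf (x n) z
        have h2 : f (x n) = y n - ε n := by rw [hy n]; ring
        have h3 : ε n ≤ Eu (x n) n := (hε n).2
        have := hz
        simp only [Set.mem_setOf_eq] at this
        linarith
  exact ⟨main, fun hx t => main t (x t) (hx t)⟩
end
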